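/- Let g be a real Lie algebra, B a complex-bilinear symmetric form on g^ℂ with B(σz, σw) = conj(B(z,w)), and q a complex Lie subalgebra of g^ℂ that is maximal B-isotropic and satisfies g^ℂ = q ⊕ σ(q). Then there is a unique endomorphism J of g with J² = -id whose complex-linear extension has q as its i-eigenspace, J satisfies N_J ≡ 0, and J is orthogonal with respect to the restriction of B to g, which is a real-valued nondegenerate symmetric bilinear form. -/

import Mathlib

/-!
The complex-linear map `J_ℂ` that is `i` on `q` and `-i` on `σ(q)` commutes with `σ`, so it is the
complexification of a real `J`; conversely `σ` forces the complexification of any `J` with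
`i`-eigenspace `q` to act by `-i` on `σ(q)`, which gives uniqueness. The Nijenhuis tensor and
`B(J·, J·) - B` are biadditive, and on pairs of eigenvectors of `J_ℂ` they are multiples of
`1 + i²`: for `N_J` this uses that `q` and `σ(q)` are subalgebras, for `B` that they are isotropic.
Finally, a real vector in the radical of `B` can be adjoined to the maximal isotropic `q`, so it
lies in `q ∩ σ(q) = 0`.
-/

open scoped TensorProduct
open Complex (I)

/-- The conjugation `σ` of `g^ℂ = ℂ ⊗ g` with respect to the real form `g`. -/
noncomputable def conjGC (L : Type*) [AddCommGroup L] [Module ℝ L] :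
    ℂ ⊗[ℝ] L →ₗ[ℝ] ℂ ⊗[ℝ] L :=
  TensorProduct.map (Complex.conjAe.toLinearMap.restrictScalars ℝ) LinearMap.id

section Complexification

variable (L : Type*) [AddCommGroup L] [Module ℝ L]

noncomputable def reGC : ℂ ⊗[ℝ] L →ₗ[ℝ] L :=
  TensorProduct.lift ((LinearMap.lsmul ℝ L).comp Complex.reLm)

noncomputable def imGC : ℂ ⊗[ℝ] L →ₗ[ℝ] L :=
  TensorProduct.lift ((LinearMap.lsmul ℝ L).comp Complex.imLm)

variable {L}

@[simp]
lemma conjGC_tmul (c : ℂ) (x : L) : conjGC L (c ⊗ₜ x) = (starRingEnd ℂ) c ⊗ₜ x := rfl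

@[simp]
lemma reGC_tmul (c : ℂ) (x : L) : reGC L (c ⊗ₜ x) = c.re • x := rfl

@[simp]
lemma imGC_tmul (c : ℂ) (x : L) : imGC L (c ⊗ₜ x) = c.im • x := rfl

@[simp]
lemma conjGC_conjGC (z : ℂ ⊗[ℝ] L) : conjGC L (conjGC L z) = z := by
  induction z using TensorProduct.induction_on <;> simp_all

lemma conjGC_smul (c : ℂ) (z : ℂ ⊗[ℝ] L) :
    conjGC L (c • z) = (starRingEnd ℂ) c • conjGC L z := by
  induction z using TensorProduct.induction_on with
  | zero => simp
  | tmul a x => simp [TensorProduct.smul_tmul']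
  | add a b ha hb => simp [ha, hb]

lemma imGC_conjGC (z : ℂ ⊗[ℝ] L) : imGC L (conjGC L z) = -imGC L z := by
  induction z using TensorProduct.induction_on with
  | zero => simp
  | tmul a x => simp
  | add a b ha hb => simp [ha, hb, add_comm]

lemma one_tmul_reGC_add_I_tmul_imGC (z : ℂ ⊗[ℝ] L) :
    (1 : ℂ) ⊗ₜ reGC L z + I ⊗ₜ imGC L z = z := by
  induction z using TensorProduct.induction_on with
  | zero => simp
  | tmul c x =>
    rw [reGC_tmul, imGC_tmul, TensorProduct.tmul_smul, TensorProduct.tmul_smul,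
      TensorProduct.smul_tmul', TensorProduct.smul_tmul', ← TensorProduct.add_tmul]
    simp [Complex.re_add_im]
  | add a b ha hb => rw [map_add, map_add, TensorProduct.tmul_add, TensorProduct.tmul_add,
      add_add_add_comm, ha, hb]

lemma eq_one_tmul_reGC_of_conjGC_eq {z : ℂ ⊗[ℝ] L} (hz : conjGC L z = z) :
    z = (1 : ℂ) ⊗ₜ reGC L z := by
  have him : imGC L z = 0 := by
    have h2 : (2 : ℝ) • imGC L z = 0 := by
      rw [two_smul]
      nth_rewrite 2 [← hz]
      rw [imGC_conjGC, add_neg_cancel]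
    exact (smul_eq_zero.1 h2).resolve_left two_ne_zero
  conv_lhs => rw [← one_tmul_reGC_add_I_tmul_imGC z, him, TensorProduct.tmul_zero, add_zero]

lemma one_tmul_inj {x y : L} : (1 : ℂ) ⊗ₜ[ℝ] x = 1 ⊗ₜ y ↔ x = y :=
  (Module.Flat.tensorProduct_mk_injective ℝ L ℂ).eq_iff

variable {M : Type*} [AddCommGroup M] [Module ℝ M]

lemma baseChange_conjGC (f : L →ₗ[ℝ] M) (z : ℂ ⊗[ℝ] L) :
    f.baseChange ℂ (conjGC L z) = conjGC M (f.baseChange ℂ z) := by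
  induction z using TensorProduct.induction_on <;> simp_all

lemma exists_baseChange_eq (f : ℂ ⊗[ℝ] L →ₗ[ℂ] ℂ ⊗[ℝ] M)
    (hf : ∀ z, f (conjGC L z) = conjGC M (f z)) : ∃ g : L →ₗ[ℝ] M, g.baseChange ℂ = f := by
  refine ⟨reGC M ∘ₗ f.restrictScalars ℝ ∘ₗ TensorProduct.mk ℝ ℂ L 1,
    TensorProduct.AlgebraTensorModule.ext fun c x => ?_⟩
  have hreal : conjGC M (f (1 ⊗ₜ x)) = f (1 ⊗ₜ x) := by rw [← hf, conjGC_tmul, map_one]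
  rw [LinearMap.baseChange_tmul, TensorProduct.tmul_eq_smul_one_tmul c,
    TensorProduct.tmul_eq_smul_one_tmul c x, map_smul]
  exact congrArg (c • ·) (eq_one_tmul_reGC_of_conjGC_eq hreal).symm

end Complexification

-- `⁅z, w⁆` on `ℂ ⊗[ℝ] L` elaborates to the extension-of-scalars `Bracket` instance, not the
-- `LieRing` one, so the generic Lie lemmas only rewrite once their Lie algebra is given.
lemma conjGC_lie {L : Type*} [LieRing L] [LieAlgebra ℝ L] (z w : ℂ ⊗[ℝ] L) :
    conjGC L ⁅z, w⁆ = ⁅conjGC L z, conjGC L w⁆ := by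
  induction z using TensorProduct.induction_on with
  | zero => simp only [zero_lie (L := ℂ ⊗[ℝ] L), map_zero]
  | add a b ha hb => simp only [add_lie, map_add, ha, hb]
  | tmul a x =>
    induction w using TensorProduct.induction_on with
    | zero => simp only [lie_zero (L := ℂ ⊗[ℝ] L), map_zero]
    | add c d hc hd => simp only [lie_add (L := ℂ ⊗[ℝ] L), map_add, hc, hd]
    | tmul b y => simp [LieAlgebra.ExtendScalars.bracket_tmul]

section Nijenhuis

variable {R L : Type*} [CommRing R] [LieRing L] [LieAlgebra R L]

def nijenhuis (J : Module.End R L) (x y : L) : L :=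
  ⁅x, y⁆ + J ⁅J x, y⁆ + J ⁅x, J y⁆ - ⁅J x, J y⁆

lemma nijenhuis_add_left (J : Module.End R L) (x x' y : L) :
    nijenhuis J (x + x') y = nijenhuis J x y + nijenhuis J x' y := by
  simp only [nijenhuis, map_add, add_lie]
  abel

lemma nijenhuis_add_right (J : Module.End R L) (x y y' : L) :
    nijenhuis J x (y + y') = nijenhuis J x y + nijenhuis J x y' := by
  simp only [nijenhuis, map_add, lie_add]
  abel

lemma nijenhuis_of_apply_eq_smul {J : Module.End R L} {x y : L} {a b : R}
    (hx : J x = a • x) (hy : J y = b • y) :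
    nijenhuis J x y = (1 - a * b) • ⁅x, y⁆ + (a + b) • J ⁅x, y⁆ := by
  simp only [nijenhuis, hx, hy, smul_lie, lie_smul, map_smul, smul_smul]
  module

lemma one_tmul_nijenhuis {A : Type*} [CommRing A] [Algebra R A] (J : Module.End R L) (x y : L) :
    (1 : A) ⊗ₜ[R] nijenhuis J x y = nijenhuis (J.baseChange A) (1 ⊗ₜ x) (1 ⊗ₜ y) := by
  simp [nijenhuis, LieAlgebra.ExtendScalars.bracket_tmul, TensorProduct.tmul_add,
    TensorProduct.tmul_sub]

end Nijenhuis

section Splitting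

variable {V : Type*} [AddCommGroup V] [Module ℂ V] {p₁ p₂ : Submodule ℂ V} {J : Module.End ℂ V}

noncomputable def complexStructureOfIsCompl (h : IsCompl p₁ p₂) : Module.End ℂ V :=
  LinearMap.ofIsCompl h (I • p₁.subtype) (-I • p₂.subtype)

lemma complexStructureOfIsCompl_apply_left (h : IsCompl p₁ p₂) {v : V} (hv : v ∈ p₁) :
    complexStructureOfIsCompl h v = I • v :=
  LinearMap.ofIsCompl_apply_left h ⟨v, hv⟩

lemma complexStructureOfIsCompl_apply_right (h : IsCompl p₁ p₂) {v : V} (hv : v ∈ p₂) :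
    complexStructureOfIsCompl h v = -I • v :=
  LinearMap.ofIsCompl_apply_right h ⟨v, hv⟩

lemma eigenspace_I_eq_of_codisjoint (hcod : Codisjoint p₁ p₂) (hJ₁ : ∀ v ∈ p₁, J v = I • v)
    (hJ₂ : ∀ v ∈ p₂, J v = -I • v) : Module.End.eigenspace J I = p₁ := by
  ext z
  refine ⟨fun hz => ?_, fun hz => Module.End.mem_eigenspace_iff.2 (hJ₁ z hz)⟩
  obtain ⟨u, v, hu, hv, rfl⟩ := Submodule.codisjoint_iff_exists_add_eq.1 hcod z
  have hv0 : (2 * I) • v = 0 := by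
    have hJz := Module.End.mem_eigenspace_iff.1 hz
    rw [map_add, hJ₁ u hu, hJ₂ v hv] at hJz
    linear_combination (norm := module) -hJz
  rw [(smul_eq_zero.1 hv0).resolve_left (by simp), add_zero]
  exact hu

lemma apply_apply_eq_neg_of_codisjoint (hcod : Codisjoint p₁ p₂) (hJ₁ : ∀ v ∈ p₁, J v = I • v)
    (hJ₂ : ∀ v ∈ p₂, J v = -I • v) (z : V) : J (J z) = -z := by
  obtain ⟨u, v, hu, hv, rfl⟩ := Submodule.codisjoint_iff_exists_add_eq.1 hcod z
  rw [map_add, hJ₁ u hu, hJ₂ v hv, map_add, map_smul, map_smul, hJ₁ u hu, hJ₂ v hv]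
  linear_combination (norm := module) Complex.I_mul_I • u + Complex.I_mul_I • v

lemma bilin_apply_apply_eq_of_codisjoint {M : Type*} [AddCommGroup M] [Module ℂ M]
    (B : V →ₗ[ℂ] V →ₗ[ℂ] M) (hcod : Codisjoint p₁ p₂) (hJ₁ : ∀ v ∈ p₁, J v = I • v)
    (hJ₂ : ∀ v ∈ p₂, J v = -I • v)
    (hB₁ : ∀ u ∈ p₁, ∀ v ∈ p₁, B u v = 0) (hB₂ : ∀ u ∈ p₂, ∀ v ∈ p₂, B u v = 0) (z w : V) :
    B (J z) (J w) = B z w := by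
  obtain ⟨u, v, hu, hv, rfl⟩ := Submodule.codisjoint_iff_exists_add_eq.1 hcod z
  obtain ⟨u', v', hu', hv', rfl⟩ := Submodule.codisjoint_iff_exists_add_eq.1 hcod w
  simp only [map_add, hJ₁ _ hu, hJ₂ _ hv, hJ₁ _ hu', hJ₂ _ hv', map_smul, LinearMap.add_apply,
    LinearMap.smul_apply, hB₁ _ hu _ hu', hB₂ _ hv _ hv']
  linear_combination (norm := module) -(Complex.I_mul_I • B u v') - Complex.I_mul_I • B v u'

end Splitting

lemma nijenhuis_eq_zero_of_codisjoint {V : Type*} [LieRing V] [LieAlgebra ℂ V]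
    {p₁ p₂ : Submodule ℂ V} {J : Module.End ℂ V}
    (hcod : Codisjoint p₁ p₂) (hJ₁ : ∀ v ∈ p₁, J v = I • v) (hJ₂ : ∀ v ∈ p₂, J v = -I • v)
    (hp₁ : ∀ u ∈ p₁, ∀ v ∈ p₁, ⁅u, v⁆ ∈ p₁) (hp₂ : ∀ u ∈ p₂, ∀ v ∈ p₂, ⁅u, v⁆ ∈ p₂)
    (z w : V) : nijenhuis J z w = 0 := by
  obtain ⟨u, v, hu, hv, rfl⟩ := Submodule.codisjoint_iff_exists_add_eq.1 hcod z
  obtain ⟨u', v', hu', hv', rfl⟩ := Submodule.codisjoint_iff_exists_add_eq.1 hcod w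
  simp only [nijenhuis_add_left, nijenhuis_add_right,
    nijenhuis_of_apply_eq_smul (hJ₁ _ hu) (hJ₁ _ hu'), hJ₁ _ (hp₁ _ hu _ hu'),
    nijenhuis_of_apply_eq_smul (hJ₁ _ hu) (hJ₂ _ hv'),
    nijenhuis_of_apply_eq_smul (hJ₂ _ hv) (hJ₁ _ hu'),
    nijenhuis_of_apply_eq_smul (hJ₂ _ hv) (hJ₂ _ hv'), hJ₂ _ (hp₂ _ hv _ hv'), smul_smul,
    ← add_smul]
  linear_combination (norm := module) Complex.I_mul_I • (⁅u, u'⁆ + ⁅u, v'⁆ + ⁅v, u'⁆ + ⁅v, v'⁆)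

lemma mem_of_forall_apply_eq_zero_of_maximal_isotropic {R V M : Type*} [CommSemiring R]
    [AddCommMonoid V] [Module R V] [AddCommMonoid M] [Module R M] (B : V →ₗ[R] V →ₗ[R] M)
    (hsymm : ∀ z w, B z w = B w z) {q : Submodule R V} (hiso : ∀ u ∈ q, ∀ v ∈ q, B u v = 0)
    (hmax : ∀ p : Submodule R V, q ≤ p → (∀ u ∈ p, ∀ v ∈ p, B u v = 0) → p = q)
    {z : V} (hz : ∀ w, B z w = 0) : z ∈ q := by
  have hiso' : ∀ u ∈ q ⊔ R ∙ z, ∀ v ∈ q ⊔ R ∙ z, B u v = 0 := by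
    intro u hu v hv
    obtain ⟨u₁, hu₁, u₂, hu₂, rfl⟩ := Submodule.mem_sup.1 hu
    obtain ⟨v₁, hv₁, v₂, hv₂, rfl⟩ := Submodule.mem_sup.1 hv
    obtain ⟨c, rfl⟩ := Submodule.mem_span_singleton.1 hu₂
    obtain ⟨d, rfl⟩ := Submodule.mem_span_singleton.1 hv₂
    simp [hiso u₁ hu₁ v₁ hv₁, hz, hsymm u₁ z]
  rw [← hmax _ le_sup_left hiso']
  exact Submodule.mem_sup_right (Submodule.mem_span_singleton_self z)

section ConjSubmodule

variable {L : Type*} [AddCommGroup L] [Module ℝ L] {q : Submodule ℂ (ℂ ⊗[ℝ] L)}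

-- `σ(q)`, written as the preimage `σ⁻¹(q)`, which is the same set since `σ` is an involution.
variable (q) in
def conjSubmodule : Submodule ℂ (ℂ ⊗[ℝ] L) where
  carrier := {z | conjGC L z ∈ q}
  add_mem' {z w} hz hw := show conjGC L (z + w) ∈ q by rw [map_add]; exact add_mem hz hw
  zero_mem' := show conjGC L 0 ∈ q by rw [map_zero]; exact q.zero_mem
  smul_mem' c z hz := show conjGC L (c • z) ∈ q by rw [conjGC_smul]; exact q.smul_mem _ hz

@[simp]
lemma mem_conjSubmodule {z : ℂ ⊗[ℝ] L} : z ∈ conjSubmodule q ↔ conjGC L z ∈ q := Iff.rfl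

lemma isCompl_conjSubmodule (hsum : ∀ w, ∃ u ∈ q, ∃ v ∈ q, w = u + conjGC L v)
    (hind : ∀ u ∈ q, ∀ v ∈ q, u + conjGC L v = 0 → u = 0 ∧ v = 0) :
    IsCompl q (conjSubmodule q) := by
  refine ⟨Submodule.disjoint_def.2 fun z hz hz' => ?_,
    Submodule.codisjoint_iff_exists_add_eq.2 fun w => ?_⟩
  · exact (hind z hz _ (neg_mem hz') (by simp)).1
  · obtain ⟨u, hu, v, hv, rfl⟩ := hsum w
    exact ⟨u, conjGC L v, hu, by simpa using hv, rfl⟩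

lemma isotropic_conjSubmodule (B : (ℂ ⊗[ℝ] L) →ₗ[ℂ] (ℂ ⊗[ℝ] L) →ₗ[ℂ] ℂ)
    (hreal : ∀ z w, B (conjGC L z) (conjGC L w) = (starRingEnd ℂ) (B z w))
    (hiso : ∀ u ∈ q, ∀ v ∈ q, B u v = 0) :
    ∀ u ∈ conjSubmodule q, ∀ v ∈ conjSubmodule q, B u v = 0 := by
  intro u hu v hv
  rw [← conjGC_conjGC u, ← conjGC_conjGC v, hreal, hiso _ hu _ hv, map_zero]

lemma complexStructureOfIsCompl_conjGC (h : IsCompl q (conjSubmodule q)) (z : ℂ ⊗[ℝ] L) :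
    complexStructureOfIsCompl h (conjGC L z) = conjGC L (complexStructureOfIsCompl h z) := by
  obtain ⟨u, v, hu, hv, rfl⟩ := Submodule.codisjoint_iff_exists_add_eq.1 h.codisjoint z
  have hu' : conjGC L u ∈ conjSubmodule q := by simpa using hu
  simp only [map_add, complexStructureOfIsCompl_apply_right h hu',
    complexStructureOfIsCompl_apply_left h hv, complexStructureOfIsCompl_apply_left h hu,
    complexStructureOfIsCompl_apply_right h hv, conjGC_smul]
  simp

lemma baseChange_eq_complexStructureOfIsCompl (h : IsCompl q (conjSubmodule q))
    (f : L →ₗ[ℝ] L) (hf : ∀ z ∈ q, f.baseChange ℂ z = I • z) :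
    f.baseChange ℂ = complexStructureOfIsCompl h := by
  refine (LinearMap.ofIsCompl_eq h (fun u => (hf u u.2).symm) fun v => ?_).symm
  calc -I • (v : ℂ ⊗[ℝ] L) = conjGC L (I • conjGC L v) := by simp [conjGC_smul]
    _ = f.baseChange ℂ v := by rw [← hf _ v.2, ← baseChange_conjGC, conjGC_conjGC]

lemma eq_zero_of_forall_apply_one_tmul_eq_zero (B : (ℂ ⊗[ℝ] L) →ₗ[ℂ] (ℂ ⊗[ℝ] L) →ₗ[ℂ] ℂ)
    (hsymm : ∀ z w, B z w = B w z) (hiso : ∀ u ∈ q, ∀ v ∈ q, B u v = 0)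
    (hmax : ∀ p : Submodule ℂ (ℂ ⊗[ℝ] L), q ≤ p → (∀ u ∈ p, ∀ v ∈ p, B u v = 0) → p = q)
    (hdisj : Disjoint q (conjSubmodule q)) {x : L} (hx : ∀ y, B (1 ⊗ₜ x) (1 ⊗ₜ y) = 0) :
    x = 0 := by
  have hrad : B (1 ⊗ₜ x) = 0 := TensorProduct.AlgebraTensorModule.ext fun c y => by
    rw [TensorProduct.tmul_eq_smul_one_tmul c, map_smul, hx, smul_zero, LinearMap.zero_apply]
  have hq : (1 : ℂ) ⊗ₜ x ∈ q :=
    mem_of_forall_apply_eq_zero_of_maximal_isotropic B hsymm hiso hmax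
      (LinearMap.congr_fun hrad)
  have hq' : (1 : ℂ) ⊗ₜ x ∈ conjSubmodule q := by simpa using hq
  rw [← one_tmul_inj (x := x), Submodule.disjoint_def.1 hdisj _ hq hq', TensorProduct.tmul_zero]

end ConjSubmodule

lemma lie_mem_conjSubmodule {L : Type*} [LieRing L] [LieAlgebra ℝ L]
    {q : Submodule ℂ (ℂ ⊗[ℝ] L)} (hsub : ∀ u ∈ q, ∀ v ∈ q, ⁅u, v⁆ ∈ q) :
    ∀ u ∈ conjSubmodule q, ∀ v ∈ conjSubmodule q, ⁅u, v⁆ ∈ conjSubmodule q := by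
  intro u hu v hv
  rw [mem_conjSubmodule, conjGC_lie]
  exact hsub _ hu _ hv

theorem isotropic_subalgebra_gives_hermitian_structure_general
    (L : Type*) [LieRing L] [LieAlgebra ℝ L]
    (B : (ℂ ⊗[ℝ] L) →ₗ[ℂ] (ℂ ⊗[ℝ] L) →ₗ[ℂ] ℂ)
    (hsymm : ∀ z w : ℂ ⊗[ℝ] L, B z w = B w z)
    (hreal : ∀ z w : ℂ ⊗[ℝ] L,
      B (conjGC L z) (conjGC L w) = (starRingEnd ℂ) (B z w))
    (q : Submodule ℂ (ℂ ⊗[ℝ] L))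
    (hsub : ∀ u ∈ q, ∀ v ∈ q, ⁅u, v⁆ ∈ q)
    (hiso : ∀ u ∈ q, ∀ v ∈ q, B u v = 0)
    (hmax : ∀ p : Submodule ℂ (ℂ ⊗[ℝ] L), q ≤ p →
      (∀ u ∈ p, ∀ v ∈ p, B u v = 0) → p = q)
    (hsum : ∀ w : ℂ ⊗[ℝ] L, ∃ u ∈ q, ∃ v ∈ q, w = u + conjGC L v)
    (hind : ∀ u ∈ q, ∀ v ∈ q, u + conjGC L v = 0 → u = 0 ∧ v = 0) :
    (∃! J : L →ₗ[ℝ] L, (∀ x : L, J (J x) = -x) ∧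
      Module.End.eigenspace (J.baseChange ℂ) Complex.I = q) ∧
    (∀ J : L →ₗ[ℝ] L, (∀ x : L, J (J x) = -x) →
      Module.End.eigenspace (J.baseChange ℂ) Complex.I = q →
      (∀ x y : L, ⁅x, y⁆ + J ⁅J x, y⁆ + J ⁅x, J y⁆ - ⁅J x, J y⁆ = 0) ∧
      (∀ x y : L, B ((1 : ℂ) ⊗ₜ[ℝ] J x) ((1 : ℂ) ⊗ₜ[ℝ] J y) =
        B ((1 : ℂ) ⊗ₜ[ℝ] x) ((1 : ℂ) ⊗ₜ[ℝ] y))) ∧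
    (∀ x y : L, (B ((1 : ℂ) ⊗ₜ[ℝ] x) ((1 : ℂ) ⊗ₜ[ℝ] y)).im = 0) ∧
    (∀ x : L, (∀ y : L, B ((1 : ℂ) ⊗ₜ[ℝ] x) ((1 : ℂ) ⊗ₜ[ℝ] y) = 0) → x = 0) := by
  have hc := isCompl_conjSubmodule hsum hind
  set Jc := complexStructureOfIsCompl hc
  have hJ₁ : ∀ v ∈ q, Jc v = I • v := fun v => complexStructureOfIsCompl_apply_left hc
  have hJ₂ : ∀ v ∈ conjSubmodule q, Jc v = -I • v := fun v =>
    complexStructureOfIsCompl_apply_right hc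
  obtain ⟨J, hJ⟩ := exists_baseChange_eq Jc (complexStructureOfIsCompl_conjGC hc)
  have hunique : ∀ J' : L →ₗ[ℝ] L, Module.End.eigenspace (J'.baseChange ℂ) I = q →
      J'.baseChange ℂ = Jc := fun J' hJ' =>
    baseChange_eq_complexStructureOfIsCompl hc J' fun z hz =>
      Module.End.mem_eigenspace_iff.1 (hJ' ▸ hz)
  refine ⟨⟨J, ⟨fun x => one_tmul_inj.1 ?_, ?_⟩, fun J' hJ' =>
    LinearMap.baseChangeHom_injective ℝ L ℂ ((hunique J' hJ'.2).trans hJ.symm)⟩,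
    fun J' _ hJ' => ⟨fun x y => one_tmul_inj.1 ?_, fun x y => ?_⟩, fun x y => ?_,
    fun x => eq_zero_of_forall_apply_one_tmul_eq_zero B hsymm hiso hmax hc.disjoint⟩
  · simpa [← LinearMap.baseChange_tmul, hJ, TensorProduct.tmul_neg] using
      apply_apply_eq_neg_of_codisjoint hc.codisjoint hJ₁ hJ₂ (1 ⊗ₜ x)
  · rw [hJ]
    exact eigenspace_I_eq_of_codisjoint hc.codisjoint hJ₁ hJ₂
  · rw [← nijenhuis, one_tmul_nijenhuis, hunique J' hJ', TensorProduct.tmul_zero]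
    exact nijenhuis_eq_zero_of_codisjoint hc.codisjoint hJ₁ hJ₂ hsub
      (lie_mem_conjSubmodule hsub) _ _
  · rw [← LinearMap.baseChange_tmul, ← LinearMap.baseChange_tmul, hunique J' hJ']
    exact bilin_apply_apply_eq_of_codisjoint B hc.codisjoint hJ₁ hJ₂ hiso
      (isotropic_conjSubmodule B hreal hiso) _ _
  · have h := hreal (1 ⊗ₜ x) (1 ⊗ₜ y)
    rw [conjGC_tmul, conjGC_tmul, map_one] at h
    exact Complex.conj_eq_iff_im.1 h.symm

/-- Given a symmetric complex bilinear form `B` on `g^ℂ` compatible with the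
conjugation `σ`, and a maximal `B`-isotropic complex Lie subalgebra `q` with
`g^ℂ = q ⊕ σ(q)`, there is a unique `J : g → g` with `J² = -id` whose
complex-linear extension has `q` as `i`-eigenspace; it satisfies `N_J ≡ 0` and
is orthogonal for the restriction of `B` to `g`, which is a real-valued
nondegenerate symmetric bilinear form. -/
theorem isotropic_subalgebra_gives_hermitian_structure
    (L : Type*) [LieRing L] [LieAlgebra ℝ L] [FiniteDimensional ℝ L]
    (B : (ℂ ⊗[ℝ] L) →ₗ[ℂ] (ℂ ⊗[ℝ] L) →ₗ[ℂ] ℂ)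
    (hsymm : ∀ z w : ℂ ⊗[ℝ] L, B z w = B w z)
    (hreal : ∀ z w : ℂ ⊗[ℝ] L,
      B (conjGC L z) (conjGC L w) = (starRingEnd ℂ) (B z w))
    (q : Submodule ℂ (ℂ ⊗[ℝ] L))
    (hsub : ∀ u ∈ q, ∀ v ∈ q, ⁅u, v⁆ ∈ q)
    (hiso : ∀ u ∈ q, ∀ v ∈ q, B u v = 0)
    (hmax : ∀ p : Submodule ℂ (ℂ ⊗[ℝ] L), q ≤ p →
      (∀ u ∈ p, ∀ v ∈ p, B u v = 0) → p = q)
    (hsum : ∀ w : ℂ ⊗[ℝ] L, ∃ u ∈ q, ∃ v ∈ q, w = u + conjGC L v)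
    (hind : ∀ u ∈ q, ∀ v ∈ q, u + conjGC L v = 0 → u = 0 ∧ v = 0) :
    (∃! J : L →ₗ[ℝ] L, (∀ x : L, J (J x) = -x) ∧
      Module.End.eigenspace (J.baseChange ℂ) Complex.I = q) ∧
    (∀ J : L →ₗ[ℝ] L, (∀ x : L, J (J x) = -x) →
      Module.End.eigenspace (J.baseChange ℂ) Complex.I = q →
      (∀ x y : L, ⁅x, y⁆ + J ⁅J x, y⁆ + J ⁅x, J y⁆ - ⁅J x, J y⁆ = 0) ∧
      (∀ x y : L, B ((1 : ℂ) ⊗ₜ[ℝ] J x) ((1 : ℂ) ⊗ₜ[ℝ] J y) =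
        B ((1 : ℂ) ⊗ₜ[ℝ] x) ((1 : ℂ) ⊗ₜ[ℝ] y))) ∧
    (∀ x y : L, (B ((1 : ℂ) ⊗ₜ[ℝ] x) ((1 : ℂ) ⊗ₜ[ℝ] y)).im = 0) ∧
    (∀ x : L, (∀ y : L, B ((1 : ℂ) ⊗ₜ[ℝ] x) ((1 : ℂ) ⊗ₜ[ℝ] y) = 0) → x = 0) :=
  isotropic_subalgebra_gives_hermitian_structure_general L B hsymm hreal q hsub hiso hmax hsum hind
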